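/- For a chain structural model X₁ → X₂ → ⋯ → X_N with Xₙ = fₙ(X_{n−1}) + Eₙ (and X₁ = f₁ + E₁), where the Eₙ are independent, the joint law of (X₁,…,X_N) factorizes as the law of X₁ times the product of the conditional (Markov kernel) laws of Xₙ given X_{n−1}: that is, the joint law equals the composition of the kernel chain κ₁ ⊗ κ₂ ⊗ ⋯ ⊗ κ_N where κₙ(x_{n−1}) is the law of fₙ(x_{n−1}) + Eₙ. -/

import Mathlib

open MeasureTheory ProbabilityTheory

/-!
The state tuple `(X₀, …, Xₙ)` is a measurable function of the noises `E₀, …, Eₙ`, hence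
independent of `Eₙ₊₁`. Since `(X₀, …, Xₙ₊₁)` is obtained from the pair
`((X₀, …, Xₙ), Eₙ₊₁)` by appending `fₙ₊₁(Xₙ) + Eₙ₊₁`, its law is the image of a product
measure, i.e. the law of `(X₀, …, Xₙ)` bound with the kernel `x ↦ law(fₙ₊₁(x) + Eₙ₊₁)`,
and induction on `n` gives the chain.
-/

/-- The measure on `Fin (n+1) → ℝ` obtained by composing an initial law `μ` with the
Markov kernel chain `κ 1, κ 2, …, κ n` (κ m is the conditional law of the (m+1)-st
coordinate given the m-th). -/
noncomputable def chainMeasure (μ : Measure ℝ) (κ : ℕ → ℝ → Measure ℝ) :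
    (n : ℕ) → Measure (Fin (n + 1) → ℝ)
  | 0 => μ.map (fun x _ => x)
  | (n + 1) => (chainMeasure μ κ n).bind
      (fun v => (κ (n + 1) (v (Fin.last n))).map (fun y => Fin.snoc v y))

theorem Measurable.finSnoc {α β : Type*} [MeasurableSpace α] [MeasurableSpace β] {n : ℕ}
    {g : α → Fin n → β} {h : α → β} (hg : Measurable g) (hh : Measurable h) :
    Measurable fun a => (Fin.snoc (g a) (h a) : Fin (n + 1) → β) := by
  refine measurable_pi_lambda _ fun i => Fin.lastCases ?_ (fun j => ?_) i
  · simpa only [Fin.snoc_last] using hh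
  · simp only [Fin.snoc_castSucc]
    exact (measurable_pi_apply j).comp hg

theorem Fin.snoc_restrict_succ {α : Type*} (a : ℕ → α) (n : ℕ) :
    (Fin.snoc (fun i : Fin (n + 1) => a i) (a (n + 1)) : Fin (n + 2) → α) =
      fun i : Fin (n + 2) => a i := by
  funext i
  exact Fin.lastCases (by simp) (fun j => by simp) i

theorem MeasureTheory.Measure.map_prod_eq_bind {α β γ : Type*} [MeasurableSpace α]
    [MeasurableSpace β] [MeasurableSpace γ] (μ : Measure α) (ν : Measure β) [SFinite ν]
    {g : α × β → γ} (hg : Measurable g) :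
    (μ.prod ν).map g = μ.bind fun a => ν.map fun b => g (a, b) := by
  rw [Measure.prod, ← Measure.bind_dirac_eq_map _ hg,
    Measure.bind_bind (g := fun x => Measure.dirac (g x))
      Measurable.map_prodMk_left.aemeasurable (Measure.measurable_dirac.comp hg).aemeasurable]
  congr 1
  funext a
  rw [Measure.bind_dirac_eq_map _ hg, Measure.map_map hg measurable_prodMk_left]
  rfl

namespace ProbabilityTheory

variable {Ω β γ : Type*} [MeasurableSpace Ω] [mβ : MeasurableSpace β] [MeasurableSpace γ]
  {P : Measure Ω}

theorem IndepFun.map_eq_bind {δ : Type*} [MeasurableSpace δ] [IsFiniteMeasure P]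
    {V : Ω → β} {W : Ω → γ} (hV : Measurable V) (hW : Measurable W) (hVW : IndepFun V W P)
    {g : β → γ → δ} (hg : Measurable (Function.uncurry g)) :
    P.map (fun ω => g (V ω) (W ω)) = (P.map V).bind fun v => P.map fun ω => g v (W ω) := by
  calc P.map (fun ω => g (V ω) (W ω))
      = (P.map fun ω => (V ω, W ω)).map (Function.uncurry g) :=
        (Measure.map_map hg (hV.prodMk hW)).symm
    _ = (P.map V).bind fun v => (P.map W).map fun w => g v w := by
        rw [IndepFun.map_prod_eq_prod_map_map hV.aemeasurable hW.aemeasurable hVW,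
          Measure.map_prod_eq_bind _ _ hg]
        rfl
    _ = (P.map V).bind fun v => P.map fun ω => g v (W ω) := by
        congr 1
        funext v
        exact Measure.map_map (hg.comp measurable_prodMk_left) hW

theorem IndepFun.map_snoc_eq_bind {n : ℕ} [IsFiniteMeasure P] {V : Ω → Fin n → β} {W : Ω → γ}
    (hV : Measurable V) (hW : Measurable W) (hVW : IndepFun V W P) {h : (Fin n → β) → γ → β}
    (hh : Measurable (Function.uncurry h)) :
    P.map (fun ω => (Fin.snoc (V ω) (h (V ω) (W ω)) : Fin (n + 1) → β)) =
      (P.map V).bind fun v => (P.map fun ω => h v (W ω)).map (Fin.snoc v) := by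
  rw [hVW.map_eq_bind hV hW (g := fun v w => (Fin.snoc v (h v w) : Fin (n + 1) → β))
    (measurable_fst.finSnoc hh)]
  congr 1
  funext v
  exact (Measure.map_map (measurable_const.finSnoc measurable_id)
    (hh.comp measurable_prodMk_left |>.comp hW)).symm

theorem iIndepFun.indepFun_tuple_of_recursion {E : ℕ → Ω → β} {X : ℕ → Ω → γ}
    {F : ℕ → γ → β → γ} (hE : ∀ n, Measurable (E n)) (hindep : iIndepFun E P)
    (hF : ∀ n, Measurable (Function.uncurry (F n))) (h0 : Measurable[mβ.comap (E 0)] (X 0))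
    (hs : ∀ n, X (n + 1) = fun ω => F n (X n ω) (E (n + 1) ω)) (n : ℕ) :
    IndepFun (fun ω (i : Fin (n + 1)) => X i ω) (E (n + 1)) P := by
  let m : ℕ → MeasurableSpace Ω := fun n => ⨆ j ∈ Set.Iic n, mβ.comap (E j)
  have hmono : Monotone m := fun k n hkn => biSup_mono fun j hj => le_trans hj hkn
  have hle : ∀ n, mβ.comap (E n) ≤ m n := fun n =>
    le_iSup₂ (f := fun j (_ : j ∈ Set.Iic n) => mβ.comap (E j)) n (Set.mem_Iic.2 le_rfl)
  have hX : ∀ n, Measurable[m n] (X n) := by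
    intro n
    induction n with
    | zero => exact h0.mono (hle 0) le_rfl
    | succ n ih =>
      rw [hs n]
      exact (hF n).comp ((ih.mono (hmono n.le_succ) le_rfl).prodMk
        (Measurable.of_comap_le (hle (n + 1))))
  have htuple : Measurable[m n] fun ω (i : Fin (n + 1)) => X i ω :=
    @measurable_pi_lambda _ _ _ (m n) _ _ fun i =>
      (hX i).mono (hmono (Nat.lt_succ_iff.mp i.isLt)) le_rfl
  have hsplit := indep_iSup_of_disjoint (fun j => (hE j).comap_le) hindep.iIndep
    (S := Set.Iic n) (T := {n + 1}) (by simp)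
  rw [IndepFun_iff_Indep]
  refine indep_of_indep_of_le_left ?_ htuple.comap_le
  simpa only [iSup_singleton] using hsplit

end ProbabilityTheory

/-- For a chain structural model `X₀ = c + E₀`, `X_{n+1} = f_{n+1}(X_n) + E_{n+1}` with
independent noises, the joint law of `(X₀, …, X_n)` factorizes as the composition of the
law of `X₀` with the chain of conditional Markov kernels `x ↦ law(f_m(x) + E_m)`. -/
theorem stmt_7
    {Ω : Type*} [MeasurableSpace Ω] (P : Measure Ω) [IsProbabilityMeasure P]
    (E : ℕ → Ω → ℝ) (hE : ∀ n, Measurable (E n))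
    (hindep : iIndepFun E P)
    (c : ℝ) (f : ℕ → ℝ → ℝ) (hf : ∀ n, Measurable (f n))
    (X : ℕ → Ω → ℝ)
    (hX0 : X 0 = fun ω => c + E 0 ω)
    (hXs : ∀ n, X (n + 1) = fun ω => f (n + 1) (X n ω) + E (n + 1) ω) :
    ∀ n : ℕ, P.map (fun ω (i : Fin (n + 1)) => X i ω)
      = chainMeasure (P.map (X 0)) (fun m x => P.map (fun ω => f m x + E m ω)) n := by
  have hX : ∀ n, Measurable (X n) := by
    intro n
    induction n with
    | zero => rw [hX0]; exact measurable_const.add (hE 0)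
    | succ n ih => rw [hXs n]; exact ((hf _).comp ih).add (hE _)
  have hindep_tuple := hindep.indepFun_tuple_of_recursion hE (F := fun n x e => f (n + 1) x + e)
    (fun n => ((hf _).comp measurable_fst).add measurable_snd)
    (hX0 ▸ measurable_const.add (comap_measurable (E 0))) hXs
  intro n
  induction n with
  | zero =>
    rw [chainMeasure, Measure.map_map (g := fun (x : ℝ) (_ : Fin 1) => x)
      (measurable_pi_lambda _ fun _ => measurable_id) (hX 0)]
    congr 1
    funext ω i
    rw [Fin.fin_one_eq_zero i]
    rfl
  | succ n ih =>
    calc P.map (fun ω (i : Fin (n + 2)) => X i ω)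
        = P.map fun ω => Fin.snoc (fun i : Fin (n + 1) => X i ω)
            (f (n + 1) (X n ω) + E (n + 1) ω) := by
          congr 1
          funext ω
          rw [← Fin.snoc_restrict_succ (X · ω), hXs]
      _ = _ := by
          rw [chainMeasure, ← ih]
          exact (hindep_tuple n).map_snoc_eq_bind
            (measurable_pi_lambda (fun ω (i : Fin (n + 1)) => X i ω) fun i => hX i) (hE _)
            (h := fun v e => f (n + 1) (v (Fin.last n)) + e)
            (((hf _).comp ((measurable_pi_apply (Fin.last n)).comp measurable_fst)).add
              measurable_snd)
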